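/- Let Z be a real symmetric n×n matrix, let ρ ≥ 1 be an integer, and let 𝓛(Z) be the (n+1)×(n+1) matrix whose upper-left n×n block equals Z, whose (i,n+1) and (n+1,i) entries equal Z_{ii} for 1 ≤ i ≤ n, and whose (n+1,n+1) entry equals 1. Then there exist r ≤ ρ vectors z_1,…,z_r ∈ {0,1}^n and weights λ_1,…,λ_r ≥ 0 with Σ_k λ_k = 1 and Z = Σ_k λ_k z_k z_kᵀ if and only if there exist r' ≤ ρ vectors x_1,…,x_{r'} ∈ {0,1}^{n+1} and weights p_1,…,p_{r'} ≥ 0 with 𝓛(Z) = Σ_k p_k x_k x_kᵀ. -/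
import Mathlib


open Matrix BigOperators

/-- The real vector associated to a boolean vector. -/
def boolVec {n : ℕ} (s : Fin n → Bool) : Fin n → ℝ := fun i => if s i then 1 else 0

/-- The rank-one matrix `x xᵀ`. -/
def rankOne {n : ℕ} (x : Fin n → ℝ) : Matrix (Fin n) (Fin n) ℝ :=
  Matrix.of fun i j => x i * x j

/-- The lifting map `𝓛`: the `(n+1)×(n+1)` matrix with upper-left block `Z`, last row
and column equal to the diagonal of `Z`, and last entry `1`. -/
def Lmap {n : ℕ} (Z : Matrix (Fin n) (Fin n) ℝ) : Matrix (Fin (n+1)) (Fin (n+1)) ℝ :=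
  Matrix.of fun i j =>
    if hi : (i : ℕ) < n then
      if hj : (j : ℕ) < n then Z ⟨i, hi⟩ ⟨j, hj⟩ else Z ⟨i, hi⟩ ⟨i, hi⟩
    else if hj : (j : ℕ) < n then Z ⟨j, hj⟩ ⟨j, hj⟩ else 1

lemma bv_nonneg {n : ℕ} (s : Fin n → Bool) (i : Fin n) : 0 ≤ boolVec s i := by
  unfold boolVec; split <;> norm_num

lemma bv_le_one {n : ℕ} (s : Fin n → Bool) (i : Fin n) : boolVec s i ≤ 1 := by
  unfold boolVec; split <;> norm_num

lemma bv_sq {n : ℕ} (s : Fin n → Bool) (i : Fin n) :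
    boolVec s i * boolVec s i = boolVec s i := by
  unfold boolVec; split <;> norm_num

lemma Lmap_cc {n : ℕ} (Z : Matrix (Fin n) (Fin n) ℝ) (a b : Fin n) :
    Lmap Z a.castSucc b.castSucc = Z a b := by
  simp [Lmap, a.is_lt, b.is_lt]

lemma Lmap_cl {n : ℕ} (Z : Matrix (Fin n) (Fin n) ℝ) (a : Fin n) :
    Lmap Z a.castSucc (Fin.last n) = Z a a := by
  simp [Lmap, a.is_lt]

lemma Lmap_lc {n : ℕ} (Z : Matrix (Fin n) (Fin n) ℝ) (b : Fin n) :
    Lmap Z (Fin.last n) b.castSucc = Z b b := by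
  simp [Lmap, b.is_lt]

lemma Lmap_ll {n : ℕ} (Z : Matrix (Fin n) (Fin n) ℝ) :
    Lmap Z (Fin.last n) (Fin.last n) = 1 := by
  simp [Lmap]

lemma sum_entry {m n : ℕ} (c : Fin m → ℝ) (x : Fin m → (Fin n → Bool)) (i j : Fin n) :
    (∑ k : Fin m, c k • rankOne (boolVec (x k))) i j
      = ∑ k : Fin m, c k * (boolVec (x k) i * boolVec (x k) j) := by
  simp [Matrix.sum_apply, rankOne]

/-- `Z` has a `COR(n)` representation using at most `ρ` rank-one boolean matrices
if and only if `𝓛(Z)` has a `CONX(n+1)` representation using at most `ρ` rank-one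
boolean matrices. -/
theorem corRank_iff_conxRank_Lmap {n : ℕ} (Z : Matrix (Fin n) (Fin n) ℝ) (hZ : Z.IsSymm)
    (ρ : ℕ) (hρ : 1 ≤ ρ) :
    (∃ r : ℕ, r ≤ ρ ∧ ∃ z : Fin r → (Fin n → Bool), ∃ lam : Fin r → ℝ,
      (∀ k, 0 ≤ lam k) ∧ (∑ k : Fin r, lam k) = 1 ∧
      Z = ∑ k : Fin r, lam k • rankOne (boolVec (z k))) ↔
    (∃ r' : ℕ, r' ≤ ρ ∧ ∃ x : Fin r' → (Fin (n+1) → Bool), ∃ p : Fin r' → ℝ,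
      (∀ k, 0 ≤ p k) ∧
      Lmap Z = ∑ k : Fin r', p k • rankOne (boolVec (x k))) := by
  constructor
  · rintro ⟨r, hr, z, lam, hnn, hsum, hZrep⟩
    refine ⟨r, hr, fun k => Fin.lastCases true (z k), lam, hnn, ?_⟩
    have bvc : ∀ k (a : Fin n),
        boolVec (fun j => Fin.lastCases true (z k) j) a.castSucc = boolVec (z k) a := by
      intro k a; simp [boolVec]
    have bvl : ∀ k, boolVec (fun j => Fin.lastCases true (z k) j) (Fin.last n) = 1 := by
      intro k; simp [boolVec]
    ext i j
    refine Fin.lastCases ?_ (fun a => ?_) i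
    · refine Fin.lastCases ?_ (fun b => ?_) j
      · rw [Lmap_ll, sum_entry]
        simp only [bvl]
        simpa using hsum.symm
      · rw [Lmap_lc, sum_entry]
        simp only [bvl, bvc]
        have := congrFun (congrFun hZrep b) b
        rw [sum_entry] at this
        rw [this]
        refine Finset.sum_congr rfl fun k _ => ?_
        rw [bv_sq]; ring
    · refine Fin.lastCases ?_ (fun b => ?_) j
      · rw [Lmap_cl, sum_entry]
        simp only [bvl, bvc]
        have := congrFun (congrFun hZrep a) a
        rw [sum_entry] at this
        rw [this]
        refine Finset.sum_congr rfl fun k _ => ?_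
        rw [bv_sq]; ring
      · rw [Lmap_cc, sum_entry]
        simp only [bvc]
        have := congrFun (congrFun hZrep a) b
        rw [sum_entry] at this
        rw [this]
  · rintro ⟨r, hr, x, p, hnn, hrep⟩
    set z : Fin r → (Fin n → Bool) := fun k i => x k i.castSucc with hz
    set lam : Fin r → ℝ := fun k => p k * boolVec (x k) (Fin.last n) with hlam
    have bvz : ∀ k (a : Fin n), boolVec (z k) a = boolVec (x k) a.castSucc := by
      intro k a; simp [boolVec, hz]
    have hlnn : ∀ k, 0 ≤ lam k := fun k => mul_nonneg (hnn k) (bv_nonneg _ _)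
    have hE : ∀ i j, Lmap Z i j = ∑ k : Fin r, p k * (boolVec (x k) i * boolVec (x k) j) := by
      intro i j
      rw [hrep, sum_entry]
    have hsum : (∑ k : Fin r, lam k) = 1 := by
      have := hE (Fin.last n) (Fin.last n)
      rw [Lmap_ll] at this
      rw [hlam]
      rw [this]
      exact Finset.sum_congr rfl fun k _ => by rw [bv_sq]
    -- key vanishing fact
    have key : ∀ (a : Fin n) k, p k * (boolVec (x k) a.castSucc
        * (1 - boolVec (x k) (Fin.last n))) = 0 := by
      intro a
      have h1 := hE a.castSucc a.castSucc
      rw [Lmap_cc] at h1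
      have h2 := hE a.castSucc (Fin.last n)
      rw [Lmap_cl] at h2
      have hzero : ∑ k : Fin r, p k * (boolVec (x k) a.castSucc
          * (1 - boolVec (x k) (Fin.last n))) = 0 := by
        have : ∑ k : Fin r, p k * (boolVec (x k) a.castSucc
            * (1 - boolVec (x k) (Fin.last n)))
            = (∑ k : Fin r, p k * (boolVec (x k) a.castSucc * boolVec (x k) a.castSucc))
              - ∑ k : Fin r, p k * (boolVec (x k) a.castSucc * boolVec (x k) (Fin.last n)) := by
          rw [← Finset.sum_sub_distrib]
          refine Finset.sum_congr rfl fun k _ => ?_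
          rw [bv_sq]; ring
        rw [this, ← h1, ← h2, sub_self]
      intro k
      have hnneg : ∀ k ∈ Finset.univ, (0:ℝ) ≤ p k * (boolVec (x k) a.castSucc
          * (1 - boolVec (x k) (Fin.last n))) := by
        intro k _
        exact mul_nonneg (hnn k) (mul_nonneg (bv_nonneg _ _) (by linarith [bv_le_one (x k) (Fin.last n)]))
      exact (Finset.sum_eq_zero_iff_of_nonneg hnneg).mp hzero k (Finset.mem_univ k)
    refine ⟨r, hr, z, lam, hlnn, hsum, ?_⟩
    ext a b
    rw [sum_entry]
    have h1 := hE a.castSucc b.castSucc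
    rw [Lmap_cc] at h1
    rw [h1]
    refine Finset.sum_congr rfl fun k _ => ?_
    rw [bvz, bvz, hlam]
    have hk := key a k
    have hk' : p k * boolVec (x k) a.castSucc
        = p k * boolVec (x k) a.castSucc * boolVec (x k) (Fin.last n) := by nlinarith [hk]
    calc p k * (boolVec (x k) a.castSucc * boolVec (x k) b.castSucc)
        = p k * boolVec (x k) a.castSucc * boolVec (x k) b.castSucc := by ring
      _ = p k * boolVec (x k) a.castSucc * boolVec (x k) (Fin.last n) * boolVec (x k) b.castSucc := by rw [← hk']
      _ = p k * boolVec (x k) (Fin.last n) * (boolVec (x k) a.castSucc * boolVec (x k) b.castSucc) := by ring
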